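/- For every real κ̃ ≥ 1 and every λ ∈ (0, 1) with λ ≠ 1/(2κ̃) and λ ≠ 1/κ̃, the filter function f is differentiable at λ and |f′(λ)| ≤ π κ̃ / 2. -/
import Mathlib


/-- The filter function `f`: `f(λ) = 1/(2κ̃λ)` for `λ ≥ 1/κ̃`,
`f(λ) = -(1/2)cos(πκ̃λ)` for `1/(2κ̃) ≤ λ ≤ 1/κ̃`, and `f(λ) = 0` for `λ ≤ 1/(2κ̃)`. -/
noncomputable def ff (κ lam : ℝ) : ℝ :=
  if 1 / κ ≤ lam then 1 / (2 * κ * lam)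
  else if 1 / (2 * κ) ≤ lam then -(1 / 2) * Real.cos (Real.pi * κ * lam)
  else 0

/-- The filter function `g`: `g(λ) = 0` for `λ ≥ 1/κ̃`,
`g(λ) = (1/2)sin(πκ̃λ)` for `1/(2κ̃) ≤ λ ≤ 1/κ̃`, and `g(λ) = 1/2` for `λ ≤ 1/(2κ̃)`. -/
noncomputable def gg (κ lam : ℝ) : ℝ :=
  if 1 / κ ≤ lam then 0
  else if 1 / (2 * κ) ≤ lam then (1 / 2) * Real.sin (Real.pi * κ * lam)
  else 1 / 2

theorem stmt_9 (κ : ℝ) (hκ : 1 ≤ κ) (lam : ℝ) (hlam : lam ∈ Set.Ioo (0 : ℝ) 1)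
    (h1 : lam ≠ 1 / (2 * κ)) (h2 : lam ≠ 1 / κ) :
    DifferentiableAt ℝ (ff κ) lam ∧ |deriv (ff κ) lam| ≤ Real.pi * κ / 2 := by
  obtain ⟨hl0, hl1⟩ := hlam
  have hκ0 : (0:ℝ) < κ := lt_of_lt_of_le zero_lt_one hκ
  have hπ : (3:ℝ) < Real.pi := Real.pi_gt_three
  rcases lt_trichotomy lam (1/κ) with hA | hA | hA
  · rcases lt_trichotomy lam (1/(2*κ)) with hB | hB | hB
    · -- lam < 1/(2κ): ff = 0 near lam
      have hev : ff κ =ᶠ[nhds lam] fun _ => (0:ℝ) := by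
        filter_upwards [Iio_mem_nhds hB] with x hx
        have hx2 : ¬ (1/(2*κ) ≤ x) := not_le.mpr hx
        have hx1 : ¬ (1/κ ≤ x) := by
          intro h
          have : 1/(2*κ) ≤ 1/κ := by
            rw [div_le_div_iff₀ (by positivity) hκ0]; nlinarith
          exact hx2 (le_trans this h)
        simp only [ff]
        rw [if_neg hx1, if_neg hx2]
      constructor
      · exact (differentiableAt_const 0).congr_of_eventuallyEq hev
      · rw [hev.deriv_eq, deriv_const]
        simp; positivity
    · exact absurd hB h1
    · -- 1/(2κ) < lam < 1/κ : ff = -(1/2) cos(πκ x)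
      have hev : ff κ =ᶠ[nhds lam] fun x => -(1/2) * Real.cos (Real.pi * κ * x) := by
        filter_upwards [Ioo_mem_nhds hB hA] with x hx
        have hx1 : ¬ (1/κ ≤ x) := not_le.mpr hx.2
        have hx2 : 1/(2*κ) ≤ x := le_of_lt hx.1
        simp only [ff]
        rw [if_neg hx1, if_pos hx2]
      have hd : DifferentiableAt ℝ (fun x => -(1/2) * Real.cos (Real.pi * κ * x)) lam := by
        apply DifferentiableAt.const_mul
        exact (Real.differentiable_cos.differentiableAt).comp lam
          ((differentiableAt_const _).mul differentiableAt_id)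
      constructor
      · exact hd.congr_of_eventuallyEq hev
      · rw [hev.deriv_eq]
        have H : HasDerivAt (fun x => -(1/2) * Real.cos (Real.pi * κ * x))
            (-(1/2) * (-Real.sin (Real.pi * κ * lam) * (Real.pi * κ))) lam := by
          have hin : HasDerivAt (fun x : ℝ => Real.pi * κ * x) (Real.pi * κ) lam := by
            simpa using (hasDerivAt_id lam).const_mul (Real.pi * κ)
          exact ((Real.hasDerivAt_cos (Real.pi * κ * lam)).comp lam hin).const_mul (-(1/2))
        rw [H.deriv]
        have hs : |Real.sin (Real.pi * κ * lam)| ≤ 1 := Real.abs_sin_le_one _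
        rw [abs_mul, abs_mul, abs_neg, abs_neg]
        have hπκ : |Real.pi * κ| = Real.pi * κ := abs_of_pos (by positivity)
        rw [hπκ]
        rw [show |(1:ℝ)/2| = 1/2 by norm_num]
        nlinarith [mul_pos Real.pi_pos hκ0, abs_nonneg (Real.sin (Real.pi * κ * lam))]
  · exact absurd hA h2
  · -- 1/κ < lam : ff = (2κ)⁻¹ * x⁻¹
    have hκl : 1 < κ * lam := by
      rw [div_lt_iff₀ hκ0] at hA; linarith [hA]
    have hev : ff κ =ᶠ[nhds lam] fun x => (2*κ)⁻¹ * x⁻¹ := by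
      filter_upwards [Ioi_mem_nhds hA] with x hx
      have hx1 : 1/κ ≤ x := le_of_lt hx
      have hx0 : x ≠ 0 := by
        have : 0 < (1:ℝ)/κ := by positivity
        exact ne_of_gt (lt_trans this hx)
      simp only [ff]
      rw [if_pos hx1]
      rw [mul_inv]
      field_simp
    have hd : DifferentiableAt ℝ (fun x => (2*κ)⁻¹ * x⁻¹) lam :=
      (differentiableAt_inv (ne_of_gt hl0)).const_mul _
    constructor
    · exact hd.congr_of_eventuallyEq hev
    · rw [hev.deriv_eq]
      have : deriv (fun x => (2*κ)⁻¹ * x⁻¹) lam = (2*κ)⁻¹ * (-(lam^2)⁻¹) := by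
        rw [deriv_const_mul _ (differentiableAt_inv (ne_of_gt hl0)), deriv_inv]
      rw [this]
      rw [abs_mul]
      have h1' : |(2*κ)⁻¹| = (2*κ)⁻¹ := abs_of_pos (by positivity)
      have h2' : |(-(lam^2)⁻¹)| = (lam^2)⁻¹ := by
        rw [abs_neg, abs_of_pos (by positivity)]
      rw [h1', h2']
      have hsq : 1 ≤ (κ*lam)^2 := by nlinarith
      rw [← one_div, ← one_div, div_mul_div_comm, div_le_div_iff₀ (by positivity) (by positivity)]
      nlinarith [mul_pos Real.pi_pos hκ0]
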